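/- arXiv:2311.10180 — 2 statements merged into one kernel-verified Lean document; each statement's English description precedes it below -/
import Mathlib

section
/- The symmetric group action is equivariant for the left composition of packed words: let u be a packed word with letter set {1,…,n}, σ a permutation of {1,…,n}, v a packed word with letter set {1,…,m}, and i ∈ {1,…,n}. Then (u·σ) ∘←_i v = (u ∘←_{σ(i)} v) · B_i(σ, id_m), where id_m is the identity permutation of {1,…,m}. -/
/-- Increment by `α` every letter strictly greater than `β`. -/
def Inc (α β : ℕ) (u : List ℕ) : List ℕ := u.map fun a => if β < a then a + α else a

/-- Maximal letter of a word. -/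
def maxLetter (v : List ℕ) : ℕ := v.foldr max 0

/-- A packed word whose letter set is exactly `{1, …, k}`. -/
def IsPackedOn (k : ℕ) (w : List ℕ) : Prop := w.toFinset = Finset.Icc 1 k

/-- A packed word. -/
def IsPacked (w : List ℕ) : Prop := ∃ k, IsPackedOn k w

/-- A permutation of `{1, …, n}` identified with the word `σ(1) ⋯ σ(n)`. -/
def IsPermWord (n : ℕ) (σ : List ℕ) : Prop :=
  σ.length = n ∧ σ.toFinset = Finset.Icc 1 n

/-- `σ` is the standardization of `w`: a permutation word of `{1, …, n}` with the same
inversions as `w` (0-based indexing). -/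
def IsStdOf (w σ : List ℕ) : Prop :=
  IsPermWord w.length σ ∧
    ∀ i j : ℕ, i < j → j < w.length →
      (w.getD j 0 < w.getD i 0 ↔ σ.getD j 0 < σ.getD i 0)

/-- The weakly increasing rearrangement (composition type) of a word. -/
def chi (w : List ℕ) : List ℕ := List.insertionSort (· ≤ ·) w

/-- Right composition `u ∘→_i v` of packed words (`i` is 1-based). -/
def rightComp (u : List ℕ) (i : ℕ) (v : List ℕ) : List ℕ :=
  Inc (maxLetter v - 1) (u.getD (i - 1) 0) (u.take (i - 1))
    ++ Inc (u.getD (i - 1) 0 - 1) 0 v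
    ++ Inc (maxLetter v - 1) (u.getD (i - 1) 0 - 1) (u.drop i)

/-- Left composition `u ∘←_i v` of packed words: replace in `Inc (m-1) i u` every
occurrence of the letter `i` by the word `Inc (i-1) 0 v`, where `m` is the maximal
letter of `v`. -/
def leftComp (u : List ℕ) (i : ℕ) (v : List ℕ) : List ℕ :=
  u.flatMap fun a =>
    if a = i then Inc (i - 1) 0 v else [if i < a then a + (maxLetter v - 1) else a]

/-- Block composition `B_i(α, β)` of permutation words (`i` is 1-based, `β` a permutation
of `{1, …, m}` with `m = β.length`). -/
def blockComp (α : List ℕ) (i : ℕ) (β : List ℕ) : List ℕ :=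
  Inc (β.length - 1) (α.getD (i - 1) 0) (α.take (i - 1))
    ++ Inc (α.getD (i - 1) 0 - 1) 0 β
    ++ Inc (β.length - 1) (α.getD (i - 1) 0 - 1) (α.drop i)

/-- The inverse of a permutation word. -/
def invWord (σ : List ℕ) : List ℕ :=
  (List.range σ.length).map fun p => σ.idxOf (p + 1) + 1

/-- The right action of a permutation word `σ` of `{1, …, n}` on a packed word with
letter set `{1, …, n}`: the `p`-th letter of `u · σ` is `σ⁻¹(u(p))`. -/
def permAct (u σ : List ℕ) : List ℕ := u.map fun a => (invWord σ).getD (a - 1) 0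

/-- The identity permutation word of `{1, …, m}`. -/
def idWord (m : ℕ) : List ℕ := (List.range m).map (· + 1)

/-- `First k u`: keep only the `k` leftmost occurrences of each letter of `u`. -/
def First (k : ℕ) (u : List ℕ) : List ℕ :=
  (List.range u.length).filterMap fun p =>
    if (u.take p).count (u.getD p 0) < k then some (u.getD p 0) else none

/-!
Both sides are computed letter by letter from `u`, so it suffices to compare the images of one
letter `a = σ(q)`. The block permutation `τ = B_i(σ, id_m)` sends position `q`, shifted past
the block at `i`, to the letter `σ(q)` shifted past the block at `σ(i)`, and sends the block
`i, …, i+m-1` onto `σ(i), …, σ(i)+m-1` in order. Since these values exhaust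
`{1, …, n+m-1}`, `τ` is a permutation word, and inverting these two descriptions of `τ` gives
exactly the letterwise identities.
-/

def incLetter (α β a : ℕ) : ℕ := if β < a then a + α else a

theorem Inc_eq_map (α β : ℕ) (u : List ℕ) : Inc α β u = u.map (incLetter α β) := rfl

theorem getD_Inc (α β p : ℕ) (u : List ℕ) :
    (Inc α β u).getD p 0 = incLetter α β (u.getD p 0) := by
  rw [Inc_eq_map, ← List.getD_map u 0 (incLetter α β)]
  rfl

theorem IsPackedOn.mem_iff {m : ℕ} {v : List ℕ} (hv : IsPackedOn m v) {c : ℕ} :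
    c ∈ v ↔ 1 ≤ c ∧ c ≤ m := by
  rw [← List.mem_toFinset, hv, Finset.mem_Icc]

theorem IsPackedOn.maxLetter_eq {m : ℕ} {v : List ℕ} (hv : IsPackedOn m v) :
    maxLetter v = m := by
  rcases Nat.eq_zero_or_pos m with rfl | hm
  · exact Nat.eq_zero_of_le_zero (List.max_le_of_forall_le v 0 fun c hc => by
      have := hv.mem_iff.1 hc; omega)
  · exact le_antisymm (List.max_le_of_forall_le v m fun c hc => (hv.mem_iff.1 hc).2)
      (List.le_max_of_le' 0 (hv.mem_iff.2 ⟨hm, le_rfl⟩) le_rfl)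

namespace IsPermWord

variable {n : ℕ} {σ : List ℕ}

theorem nodup (hσ : IsPermWord n σ) : σ.Nodup := by
  rw [← Multiset.coe_nodup, ← Multiset.toFinset_card_eq_card_iff_nodup]
  change σ.toFinset.card = σ.length
  rw [hσ.2, Nat.card_Icc, hσ.1, Nat.add_sub_cancel]

theorem mem_iff (hσ : IsPermWord n σ) {a : ℕ} : a ∈ σ ↔ 1 ≤ a ∧ a ≤ n := by
  rw [← List.mem_toFinset, hσ.2, Finset.mem_Icc]

theorem getD_mem_Icc (hσ : IsPermWord n σ) {p : ℕ} (hp : p < n) :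
    1 ≤ σ.getD p 0 ∧ σ.getD p 0 ≤ n := by
  rw [← hσ.mem_iff, List.getD_eq_getElem _ _ (hσ.1 ▸ hp)]
  exact List.getElem_mem _

theorem exists_getD_eq (hσ : IsPermWord n σ) {a : ℕ} (ha : 1 ≤ a ∧ a ≤ n) :
    ∃ p < n, σ.getD p 0 = a := by
  obtain ⟨p, hp, rfl⟩ := List.getElem_of_mem (hσ.mem_iff.2 ha)
  exact ⟨p, hσ.1 ▸ hp, List.getD_eq_getElem _ _ hp⟩

theorem getD_invWord_getD (hσ : IsPermWord n σ) {p : ℕ} (hp : p < n) :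
    (invWord σ).getD (σ.getD p 0 - 1) 0 = p + 1 := by
  have hlen := hσ.1
  have hpσ : p < σ.length := hlen ▸ hp
  have ha := hσ.getD_mem_Icc hp
  rw [invWord, List.getD_eq_getElem _ _ (by rw [List.length_map, List.length_range]; omega),
    List.getElem_map, List.getElem_range, Nat.sub_add_cancel ha.1, List.getD_eq_getElem _ _ hpσ,
    hσ.nodup.idxOf_getElem]

theorem eq_of_getD_eq (hσ : IsPermWord n σ) {p q : ℕ} (hp : p < n) (hq : q < n)
    (h : σ.getD p 0 = σ.getD q 0) : p = q := by
  have := hσ.getD_invWord_getD hp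
  rw [h, hσ.getD_invWord_getD hq] at this
  omega

theorem of_forall_mem {N : ℕ} {w : List ℕ} (hlen : w.length = N)
    (hmem : ∀ b, 1 ≤ b → b ≤ N → b ∈ w) : IsPermWord N w := by
  refine ⟨hlen, (Finset.eq_of_subset_of_card_le (fun b hb => ?_) ?_).symm⟩
  · rw [Finset.mem_Icc] at hb
    exact List.mem_toFinset.2 (hmem b hb.1 hb.2)
  · rw [Nat.card_Icc, Nat.add_sub_cancel, ← hlen]
    exact List.toFinset_card_le w

end IsPermWord

theorem length_Inc (α β : ℕ) (u : List ℕ) : (Inc α β u).length = u.length :=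
  List.length_map _

theorem getD_take_of_lt {w : List ℕ} {k p : ℕ} (hp : p < k) :
    (w.take k).getD p 0 = w.getD p 0 := by
  simp only [List.getD_eq_getElem?_getD, List.getElem?_take, if_pos hp]

theorem getD_drop (w : List ℕ) (k p : ℕ) : (w.drop k).getD p 0 = w.getD (k + p) 0 := by
  simp only [List.getD_eq_getElem?_getD, List.getElem?_drop]

-- Positions in words are 0-based: the block of `blockComp α i β` starts at position `i - 1`.
section blockComp

variable {α β : List ℕ} {i : ℕ}

theorem length_blockComp (hi : 1 ≤ i) (hiα : i ≤ α.length) :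
    (blockComp α i β).length = α.length + β.length - 1 := by
  simp only [blockComp, length_Inc, List.length_append, List.length_take, List.length_drop]
  omega

theorem getD_blockComp_of_lt {p : ℕ} (hp : p < i - 1) (hiα : i ≤ α.length) :
    (blockComp α i β).getD p 0
      = incLetter (β.length - 1) (α.getD (i - 1) 0) (α.getD p 0) := by
  rw [blockComp, List.append_assoc, List.getD_append _ _ _ _ (by
    rw [length_Inc, List.length_take]; omega), getD_Inc, getD_take_of_lt hp]

theorem getD_blockComp_block {c : ℕ} (hiα : i ≤ α.length) (hc : c < β.length) :
    (blockComp α i β).getD (i - 1 + c) 0 = incLetter (α.getD (i - 1) 0 - 1) 0 (β.getD c 0) := by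
  have hA : (Inc (β.length - 1) (α.getD (i - 1) 0) (α.take (i - 1))).length = i - 1 := by
    rw [length_Inc, List.length_take]; omega
  rw [blockComp, List.append_assoc, List.getD_append_right _ _ _ _ (by omega), hA,
    List.getD_append _ _ _ _ (by rw [length_Inc]; omega), getD_Inc, Nat.add_sub_cancel_left]

theorem getD_blockComp_of_gt {p : ℕ} (hi : 1 ≤ i) (hp : i - 1 < p) (hpα : p < α.length) :
    (blockComp α i β).getD (p + β.length - 1) 0
      = incLetter (β.length - 1) (α.getD (i - 1) 0 - 1) (α.getD p 0) := by
  have hAB : (Inc (β.length - 1) (α.getD (i - 1) 0) (α.take (i - 1))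
      ++ Inc (α.getD (i - 1) 0 - 1) 0 β).length = i - 1 + β.length := by
    rw [List.length_append, length_Inc, length_Inc, List.length_take]; omega
  rw [blockComp, List.getD_append_right _ _ _ _ (by omega), hAB, getD_Inc, getD_drop]
  congr 2
  omega

end blockComp

theorem getD_idWord {m c : ℕ} (hc : c < m) : (idWord m).getD c 0 = c + 1 := by
  rw [idWord, List.getD_eq_getElem _ _ (by simpa using hc), List.getElem_map, List.getElem_range]

theorem length_idWord (m : ℕ) : (idWord m).length = m := by
  rw [idWord, List.length_map, List.length_range]

section blockCompIdWord

variable {n m i : ℕ} {σ : List ℕ}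

theorem getD_blockComp_idWord_block (hσ : IsPermWord n σ) (hi : 1 ≤ i) (hin : i ≤ n) {c : ℕ}
    (hc : c < m) :
    (blockComp σ i (idWord m)).getD (i - 1 + c) 0 = σ.getD (i - 1) 0 + c := by
  have hσi := hσ.getD_mem_Icc (p := i - 1) (by omega)
  rw [getD_blockComp_block (hσ.1 ▸ hin) (by rwa [length_idWord]), getD_idWord hc, incLetter,
    if_pos (Nat.succ_pos c)]
  omega

theorem getD_blockComp_idWord_incLetter (hσ : IsPermWord n σ) (hi : 1 ≤ i) (hin : i ≤ n)
    (hm : 1 ≤ m) {q : ℕ} (hq : q < n) (hqi : q ≠ i - 1) :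
    (blockComp σ i (idWord m)).getD (incLetter (m - 1) (i - 1) q) 0
      = incLetter (m - 1) (σ.getD (i - 1) 0) (σ.getD q 0) := by
  have hlen := hσ.1
  rcases Nat.lt_or_gt_of_ne hqi with hlt | hgt
  · rw [incLetter, if_neg (by omega), getD_blockComp_of_lt hlt (by omega), length_idWord]
  · have hne : σ.getD q 0 ≠ σ.getD (i - 1) 0 := fun h =>
      hqi (hσ.eq_of_getD_eq hq (by omega) h)
    have hτ := getD_blockComp_of_gt (α := σ) (β := idWord m) hi hgt (by omega)
    rw [length_idWord] at hτ
    rw [incLetter, if_pos hgt, ← Nat.add_sub_assoc hm, hτ]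
    simp only [incLetter]
    split_ifs <;> omega

theorem IsPermWord.blockComp_idWord (hσ : IsPermWord n σ) (hi : 1 ≤ i) (hin : i ≤ n)
    (hm : 1 ≤ m) : IsPermWord (n + m - 1) (blockComp σ i (idWord m)) := by
  have hlen : (blockComp σ i (idWord m)).length = n + m - 1 := by
    rw [length_blockComp hi (hσ.1 ▸ hin), hσ.1, length_idWord]
  have getD_mem {p : ℕ} (hp : p < n + m - 1) :
      (blockComp σ i (idWord m)).getD p 0 ∈ blockComp σ i (idWord m) := by
    rw [List.getD_eq_getElem _ _ (hlen ▸ hp)]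
    exact List.getElem_mem _
  refine IsPermWord.of_forall_mem hlen fun b hb1 hbN => ?_
  set j := σ.getD (i - 1) 0 with hj
  have hjn := hσ.getD_mem_Icc (p := i - 1) (by omega)
  by_cases hblock : j ≤ b ∧ b < j + m
  · have := getD_blockComp_idWord_block (m := m) hσ hi hin (c := b - j) (by omega)
    rw [← hj, Nat.add_sub_cancel' hblock.1] at this
    exact this ▸ getD_mem (by omega)
  · set a := if b < j then b else b - (m - 1) with ha
    obtain ⟨q, hq, hqa⟩ := hσ.exists_getD_eq (a := a) (by rw [ha]; split_ifs <;> omega)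
    have hqi : q ≠ i - 1 := by rintro rfl; rw [← hj, ha] at hqa; split_ifs at hqa <;> omega
    have := getD_blockComp_idWord_incLetter hσ hi hin hm hq hqi
    have hab : incLetter (m - 1) j a = b := by simp only [incLetter, ha]; split_ifs <;> omega
    rw [← hj, hqa, hab] at this
    exact this ▸ getD_mem (by simp only [incLetter]; split_ifs <;> omega)

theorem getD_invWord_blockComp_idWord_block (hσ : IsPermWord n σ) (hi : 1 ≤ i) (hin : i ≤ n)
    {c : ℕ} (hc : 1 ≤ c ∧ c ≤ m) :
    (invWord (blockComp σ i (idWord m))).getD (incLetter (σ.getD (i - 1) 0 - 1) 0 c - 1) 0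
      = incLetter (i - 1) 0 c := by
  have hj := hσ.getD_mem_Icc (p := i - 1) (by omega)
  have hτ := getD_blockComp_idWord_block (m := m) hσ hi hin (c := c - 1) (by omega)
  have hc0 : 0 < c := hc.1
  simp only [incLetter, if_pos hc0]
  rw [show c + (σ.getD (i - 1) 0 - 1) - 1 = σ.getD (i - 1) 0 + (c - 1) - 1 by omega, ← hτ,
    (hσ.blockComp_idWord hi hin (by omega)).getD_invWord_getD (by omega)]
  omega

theorem getD_invWord_blockComp_idWord_incLetter (hσ : IsPermWord n σ) (hi : 1 ≤ i)
    (hin : i ≤ n) (hm : 1 ≤ m) {q : ℕ} (hq : q < n) (hqi : q ≠ i - 1) :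
    (invWord (blockComp σ i (idWord m))).getD
        (incLetter (m - 1) (σ.getD (i - 1) 0) (σ.getD q 0) - 1) 0
      = incLetter (m - 1) i (q + 1) := by
  have hpos : incLetter (m - 1) (i - 1) q < n + m - 1 := by
    simp only [incLetter]; split_ifs <;> omega
  rw [← getD_blockComp_idWord_incLetter hσ hi hin hm hq hqi,
    (hσ.blockComp_idWord hi hin hm).getD_invWord_getD hpos]
  simp only [incLetter]
  split_ifs <;> omega

end blockCompIdWord

theorem leftComp_eq_flatMap (u : List ℕ) (i : ℕ) (v : List ℕ) :
    leftComp u i v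
      = u.flatMap fun a => if a = i then Inc (i - 1) 0 v else [incLetter (maxLetter v - 1) i a] :=
  rfl

/-- Equivariance of the symmetric group action for the left composition of packed words:
`(u · σ) ∘←_i v = (u ∘←_{σ(i)} v) · B_i(σ, id_m)`. -/
theorem leftComp_equivariant (n m i : ℕ) (u σ v : List ℕ)
    (hu : IsPackedOn n u) (hσ : IsPermWord n σ) (hv : IsPackedOn m v)
    (hm : 1 ≤ m) (hi : i ∈ Finset.Icc 1 n) :
    leftComp (permAct u σ) i v
      = permAct (leftComp u (σ.getD (i - 1) 0) v) (blockComp σ i (idWord m)) := by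
  obtain ⟨hi1, hin⟩ := Finset.mem_Icc.1 hi
  rw [leftComp_eq_flatMap, leftComp_eq_flatMap, permAct, permAct, List.flatMap_map,
    List.map_flatMap, hv.maxLetter_eq]
  refine List.flatMap_congr fun a ha => ?_
  obtain ⟨q, hq, rfl⟩ := hσ.exists_getD_eq (hu.mem_iff.1 ha)
  rw [hσ.getD_invWord_getD hq]
  by_cases hqi : q = i - 1
  · subst hqi
    rw [if_pos (by omega), if_pos rfl, Inc_eq_map, Inc_eq_map, List.map_map]
    exact List.map_congr_left fun c hc =>
      (getD_invWord_blockComp_idWord_block hσ hi1 hin (hv.mem_iff.1 hc)).symm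
  · have hne : σ.getD q 0 ≠ σ.getD (i - 1) 0 := fun h =>
      hqi (hσ.eq_of_getD_eq hq (by omega) h)
    rw [if_neg (by omega), if_neg hne, List.map_singleton,
      getD_invWord_blockComp_idWord_incLetter hσ hi1 hin hm hq hqi]
end

section
/- The map First_1 is a morphism from the left composition of packed words to the left composition of permutations: for packed words u with letter set {1,…,n} and v with letter set {1,…,m}, and i ∈ {1,…,n}, one has First_1(u ∘←_i v) = First_1(u) ∘←_i First_1(v). In particular, First_1(u) and First_1(v) are permutations of {1,…,n} and {1,…,m} respectively, and the quotient of the left operad of packed words by ≡_1 is the left associative operad of permutations. -/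
/-! `First 1` keeps the leftmost occurrence of each letter, so
`First 1 (a :: l) = a :: (First 1 l).filter (· ≠ a)` and
`First 1 (s ++ t) = First 1 s ++ (First 1 t).filter (· ∉ s)`.
The left composition `u ∘←_i v` is the concatenation of one block per letter of `u`, and for
`1 ≤ i` blocks of distinct letters are disjoint. Hence `First 1` of the concatenation keeps,
for each letter of `First 1 u`, its block with `First 1` applied inside, and `First 1` commutes
with the injective relabelling that turns `v` into the block of `i`. -/

theorem first_one_cons (a : ℕ) (l : List ℕ) :
    First 1 (a :: l) = a :: (First 1 l).filter (· ≠ a) := by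
  simp only [First, List.length_cons, List.range_succ_eq_map, List.filterMap_cons,
    List.filterMap_map, List.filter_filterMap]
  simp only [List.take_zero, List.count_nil, List.getD_cons_zero, Nat.lt_one_iff, if_true,
    List.cons.injEq, true_and]
  refine List.filterMap_congr fun p _ => ?_
  simp only [Function.comp, Nat.succ_eq_add_one, List.take_succ_cons, List.getD_cons_succ,
    List.count_cons]
  generalize l.getD p 0 = x
  by_cases h : x = a <;> split_ifs <;> simp_all [Option.filter]

theorem mem_first_one {b : ℕ} {l : List ℕ} : b ∈ First 1 l ↔ b ∈ l := by
  induction l with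
  | nil => simp [First]
  | cons a l ih =>
    rw [first_one_cons]
    by_cases h : b = a <;> simp [h, ih]

theorem nodup_first_one (l : List ℕ) : (First 1 l).Nodup := by
  induction l with
  | nil => simp [First]
  | cons a l ih =>
    rw [first_one_cons, List.nodup_cons]
    exact ⟨by simp, ih.filter _⟩

theorem toFinset_first_one (l : List ℕ) : (First 1 l).toFinset = l.toFinset := by
  ext b
  simp [mem_first_one]

theorem first_one_append (s t : List ℕ) :
    First 1 (s ++ t) = First 1 s ++ (First 1 t).filter (· ∉ s) := by
  induction s with
  | nil => simp [First]
  | cons a s ih =>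
    rw [List.cons_append, first_one_cons, first_one_cons, ih, List.filter_append,
      List.filter_filter, List.cons_append]
    congr 3
    ext b
    simp

theorem first_one_map {g : ℕ → ℕ} (hg : Function.Injective g) (l : List ℕ) :
    First 1 (l.map g) = (First 1 l).map g := by
  induction l with
  | nil => simp [First]
  | cons a l ih =>
    simp only [List.map_cons, first_one_cons, ih, List.filter_map]
    congr 2
    exact List.filter_congr fun b _ => by simp [hg.eq_iff]

theorem first_one_singleton (a : ℕ) : First 1 [a] = [a] := by
  simp [First]

theorem filter_flatMap_notMem_of_pairwise_disjoint {F : ℕ → List ℕ}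
    (hF : Pairwise fun a c => (F a).Disjoint (F c)) (a : ℕ) (w : List ℕ) :
    (w.flatMap fun c => First 1 (F c)).filter (· ∉ F a)
      = (w.filter (· ≠ a)).flatMap fun c => First 1 (F c) := by
  induction w with
  | nil => rfl
  | cons c w ih =>
    rw [List.flatMap_cons, List.filter_append, ih, List.filter_cons]
    by_cases hca : c = a
    · subst hca
      simp [List.filter_eq_nil_iff, mem_first_one]
    · have hkeep : (First 1 (F c)).filter (· ∉ F a) = First 1 (F c) :=
        List.filter_eq_self.mpr fun b hb => by
          simpa using fun hb' => hF hca (mem_first_one.mp hb) hb'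
      rw [hkeep]
      simp [hca]

theorem first_one_flatMap {F : ℕ → List ℕ} (hF : Pairwise fun a c => (F a).Disjoint (F c))
    (u : List ℕ) : First 1 (u.flatMap F) = (First 1 u).flatMap fun a => First 1 (F a) := by
  induction u with
  | nil => simp [First]
  | cons a u ih =>
    rw [List.flatMap_cons, first_one_append, ih, first_one_cons, List.flatMap_cons,
      filter_flatMap_notMem_of_pairwise_disjoint hF]

theorem maxLetter_eq_sup (l : List ℕ) : maxLetter l = l.toFinset.sup id := by
  induction l with
  | nil => rfl
  | cons a l ih => simp [maxLetter, ← ih]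

theorem le_maxLetter {x : ℕ} {l : List ℕ} (hx : x ∈ l) : x ≤ maxLetter l := by
  rw [maxLetter_eq_sup]
  exact Finset.le_sup (f := id) (List.mem_toFinset.mpr hx)

theorem maxLetter_first_one (l : List ℕ) : maxLetter (First 1 l) = maxLetter l := by
  rw [maxLetter_eq_sup, maxLetter_eq_sup, toFinset_first_one]

def leftBlock (i M : ℕ) (v : List ℕ) (a : ℕ) : List ℕ :=
  if a = i then Inc (i - 1) 0 v else [if i < a then a + (M - 1) else a]

theorem leftComp_eq_flatMap_s18 (u : List ℕ) (i : ℕ) (v : List ℕ) :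
    leftComp u i v = u.flatMap (leftBlock i (maxLetter v) v) := rfl

-- The block of `i` lies in `[i, i + M - 1]`;
-- a letter `a ≠ i` gives `a < i` or `a + M - 1 ≥ i + M`.
theorem pairwise_disjoint_leftBlock {i M : ℕ} {v : List ℕ} (hi : 1 ≤ i)
    (hv : ∀ x ∈ v, 1 ≤ x ∧ x ≤ M) :
    Pairwise fun a c => (leftBlock i M v a).Disjoint (leftBlock i M v c) := by
  intro a c hac b hba hbc
  unfold leftBlock Inc at hba hbc
  split_ifs at hba hbc <;> simp only [List.mem_map, List.mem_singleton] at hba hbc <;> grind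

theorem first_one_leftBlock (i M : ℕ) (v : List ℕ) (a : ℕ) :
    First 1 (leftBlock i M v a) = leftBlock i M (First 1 v) a := by
  unfold leftBlock
  split_ifs
  · exact first_one_map (fun x y hxy => by split_ifs at hxy <;> omega) v
  all_goals exact first_one_singleton _

theorem isPermWord_first_one {n : ℕ} {u : List ℕ} (hu : IsPackedOn n u) :
    IsPermWord n (First 1 u) := by
  have hset : (First 1 u).toFinset = Finset.Icc 1 n := (toFinset_first_one u).trans hu
  refine ⟨?_, hset⟩
  rw [← List.toFinset_card_of_nodup (nodup_first_one u), hset, Nat.card_Icc, Nat.add_sub_cancel]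

theorem first_one_morphism_general (n m i : ℕ) (u v : List ℕ)
    (hu : IsPackedOn n u) (hv : IsPackedOn m v)
    (hi : i ∈ Finset.Icc 1 n) :
    First 1 (leftComp u i v) = leftComp (First 1 u) i (First 1 v) ∧
    IsPermWord n (First 1 u) ∧ IsPermWord m (First 1 v) := by
  have hv_bounds : ∀ x ∈ v, 1 ≤ x ∧ x ≤ maxLetter v := fun x hx =>
    ⟨(Finset.mem_Icc.mp (hv ▸ List.mem_toFinset.mpr hx)).1, le_maxLetter hx⟩
  refine ⟨?_, isPermWord_first_one hu, isPermWord_first_one hv⟩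
  rw [leftComp_eq_flatMap_s18, leftComp_eq_flatMap_s18, maxLetter_first_one,
    first_one_flatMap (pairwise_disjoint_leftBlock (Finset.mem_Icc.mp hi).1 hv_bounds)]
  simp only [first_one_leftBlock]

/-- `First_1` is a morphism from the left composition of packed words to the left
composition of permutations; in particular `First_1(u)` and `First_1(v)` are permutation
words of `{1, …, n}` and `{1, …, m}` respectively. -/
theorem first_one_morphism (n m i : ℕ) (u v : List ℕ)
    (hu : IsPackedOn n u) (hv : IsPackedOn m v)
    (hi : i ∈ Finset.Icc 1 n) (hm : 1 ≤ m) :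
    First 1 (leftComp u i v) = leftComp (First 1 u) i (First 1 v) ∧
    IsPermWord n (First 1 u) ∧ IsPermWord m (First 1 v) :=
  first_one_morphism_general n m i u v hu hv hi
end
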